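/- For every M > 0 and integers m, n ≥ 0 there exists a constant C, depending only on m, n, M, such that |∂ₓⁿ ∂ₖᵐ u^{BS}(σ;τ,x,k)| ≤ C·eˣ·(σ√τ)^{min(1−m−n, 0)} for all x, k ∈ ℝ and all σ, τ > 0 with σ√τ ≤ M. -/

import Mathlib

noncomputable def Gauss (t x : ℝ) : ℝ :=
  (Real.sqrt (2 * Real.pi * t))⁻¹ * Real.exp (-x ^ 2 / (2 * t))

/-- Standard normal cumulative distribution function. -/
noncomputable def normalCDF (x : ℝ) : ℝ :=
  (Real.sqrt (2 * Real.pi))⁻¹ * ∫ s in Set.Iic x, Real.exp (-s ^ 2 / 2)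

/-- Black–Scholes call price `u^{BS}(σ; τ, x, k)` in log variables. -/
noncomputable def uBS (σ τ x k : ℝ) : ℝ :=
  Real.exp x * normalCDF ((x - k + σ ^ 2 * τ / 2) / (σ * Real.sqrt τ)) -
    Real.exp k * normalCDF ((x - k - σ ^ 2 * τ / 2) / (σ * Real.sqrt τ))

/-!
With `s = σ√τ` one has `u^{BS}(σ;τ,x,k) = eˣ F_s(x - k)` for the profile
`F_s(z) = 𝒩(z/s + s/2) - e^{-z} 𝒩(z/s - s/2)`. The identity `e^{-z} φ(z/s - s/2) = φ(z/s + s/2)`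
for the Gaussian density `φ` gives `F_s' = G_s := e^{-z} 𝒩(z/s - s/2)` and
`G_s' = -G_s + s⁻¹ φ(z/s + s/2)`. Now `0 ≤ G_s ≤ 1` (Chernoff bound for `𝒩` when `z < 0`) and every
derivative of `φ` is a Hermite polynomial times the Gaussian, hence bounded; by induction
`|F_s^{(j)}| ≤ C_j (1 + s⁻¹)^{j-1}` for `j ≥ 1`, and `|F_s| ≤ 1`. Strike derivatives fall on `F_s`
alone, Leibniz's rule for `eˣ F_s^{(m)}(x - k)` costs a factor `2ⁿ`, and `1 + s⁻¹ ≤ (M + 1) s⁻¹`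
for `s ≤ M`.
-/

open Real MeasureTheory Set Filter Polynomial
open scoped ContDiff Nat

noncomputable def normalPDF (y : ℝ) : ℝ := (√(2 * π))⁻¹ * exp (-y ^ 2 / 2)

lemma integrable_exp_neg_sq_div_two : Integrable fun t : ℝ => exp (-t ^ 2 / 2) := by
  simpa [neg_div, div_eq_inv_mul] using integrable_exp_neg_mul_sq (b := 1 / 2) (by norm_num)

lemma integral_exp_neg_sq_div_two : ∫ t : ℝ, exp (-t ^ 2 / 2) = √(2 * π) := by
  simpa [neg_div, div_eq_inv_mul, div_div_eq_mul_div, mul_comm] using integral_gaussian (1 / 2)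

lemma hasDerivAt_normalCDF (y : ℝ) : HasDerivAt normalCDF (normalPDF y) y := by
  have hsplit : normalCDF = fun x => (√(2 * π))⁻¹ *
      ((∫ t in Iic 0, exp (-t ^ 2 / 2)) + ∫ t in (0 : ℝ)..x, exp (-t ^ 2 / 2)) := by
    funext x
    rw [normalCDF, ← intervalIntegral.integral_Iic_sub_Iic
      integrable_exp_neg_sq_div_two.integrableOn integrable_exp_neg_sq_div_two.integrableOn]
    ring
  have hcont : Continuous fun t : ℝ => exp (-t ^ 2 / 2) := by fun_prop
  rw [hsplit]
  exact ((intervalIntegral.integral_hasDerivAt_right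
    integrable_exp_neg_sq_div_two.intervalIntegrable
    hcont.aestronglyMeasurable.stronglyMeasurableAtFilter hcont.continuousAt).const_add _).const_mul _

lemma contDiff_normalCDF : ContDiff ℝ ∞ normalCDF := by
  have hderiv : deriv normalCDF = normalPDF := funext fun y => (hasDerivAt_normalCDF y).deriv
  refine contDiff_infty_iff_deriv.2 ⟨fun y => (hasDerivAt_normalCDF y).differentiableAt, ?_⟩
  rw [hderiv]
  unfold normalPDF
  fun_prop

lemma normalCDF_nonneg (y : ℝ) : 0 ≤ normalCDF y :=
  mul_nonneg (by positivity) (setIntegral_nonneg measurableSet_Iic fun t _ => (exp_pos _).le)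

lemma normalCDF_le_one (y : ℝ) : normalCDF y ≤ 1 := by
  rw [normalCDF, inv_mul_le_iff₀ (by positivity), mul_one, ← integral_exp_neg_sq_div_two]
  exact setIntegral_le_integral integrable_exp_neg_sq_div_two
    (Eventually.of_forall fun t => (exp_pos _).le)

lemma normalCDF_le_exp_neg_sq {y : ℝ} (hy : y ≤ 0) : normalCDF y ≤ exp (-y ^ 2 / 2) := by
  have hint : Integrable fun t : ℝ => exp (-y ^ 2 / 2) * exp (-(t - y) ^ 2 / 2) :=
    (integrable_exp_neg_sq_div_two.comp_sub_right y).const_mul _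
  have hpoint : ∀ t ∈ Iic y, exp (-t ^ 2 / 2) ≤ exp (-y ^ 2 / 2) * exp (-(t - y) ^ 2 / 2) := by
    intro t ht
    rw [← exp_add, exp_le_exp]
    nlinarith [mul_nonneg (neg_nonneg.2 hy) (sub_nonneg.2 (mem_Iic.1 ht))]
  rw [normalCDF, inv_mul_le_iff₀ (by positivity)]
  calc ∫ t in Iic y, exp (-t ^ 2 / 2)
      ≤ ∫ t in Iic y, exp (-y ^ 2 / 2) * exp (-(t - y) ^ 2 / 2) :=
        setIntegral_mono_on integrable_exp_neg_sq_div_two.integrableOn hint.integrableOn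
          measurableSet_Iic hpoint
    _ ≤ ∫ t, exp (-y ^ 2 / 2) * exp (-(t - y) ^ 2 / 2) :=
        setIntegral_le_integral hint (Eventually.of_forall fun t => by positivity)
    _ = √(2 * π) * exp (-y ^ 2 / 2) := by
        rw [integral_const_mul, integral_sub_right_eq_self (fun t => exp (-t ^ 2 / 2)) y,
          integral_exp_neg_sq_div_two, mul_comm]

lemma abs_pow_mul_exp_neg_sq_le (i : ℕ) (y : ℝ) :
    |y| ^ i * exp (-y ^ 2 / 2) ≤ i ! * exp (1 / 2) := by
  have hpow : |y| ^ i ≤ i ! * exp |y| := by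
    have := Real.pow_div_factorial_le_exp (x := |y|) (abs_nonneg y) i
    rwa [div_le_iff₀ (by positivity), mul_comm] at this
  calc |y| ^ i * exp (-y ^ 2 / 2) ≤ i ! * exp |y| * exp (-y ^ 2 / 2) := by gcongr
    _ = i ! * exp (|y| - y ^ 2 / 2) := by rw [mul_assoc, ← exp_add]; ring_nf
    _ ≤ i ! * exp (1 / 2) := by
        gcongr
        nlinarith [sq_nonneg (|y| - 1), sq_abs y]

lemma exists_abs_aeval_mul_exp_neg_sq_le {R : Type*} [CommSemiring R] [Algebra R ℝ] (p : R[X]) :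
    ∃ C, ∀ y : ℝ, |aeval y p * exp (-y ^ 2 / 2)| ≤ C := by
  induction p using Polynomial.induction_on' with
  | add p q hp hq =>
    obtain ⟨Cp, hCp⟩ := hp
    obtain ⟨Cq, hCq⟩ := hq
    refine ⟨Cp + Cq, fun y => ?_⟩
    rw [map_add, add_mul]
    exact (abs_add_le _ _).trans (add_le_add (hCp y) (hCq y))
  | monomial i a =>
    refine ⟨|algebraMap R ℝ a| * (i ! * exp (1 / 2)), fun y => ?_⟩
    rw [aeval_monomial, mul_assoc, abs_mul, abs_mul, abs_pow, abs_of_pos (exp_pos _)]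
    exact mul_le_mul_of_nonneg_left (abs_pow_mul_exp_neg_sq_le i y) (abs_nonneg _)

lemma exists_abs_iteratedDeriv_normalPDF_le (i : ℕ) :
    ∃ C, ∀ y, |iteratedDeriv i normalPDF y| ≤ C := by
  obtain ⟨C, hC⟩ := exists_abs_aeval_mul_exp_neg_sq_le (hermite i)
  refine ⟨(√(2 * π))⁻¹ * C, fun y => ?_⟩
  have hφ : normalPDF = fun y => (√(2 * π))⁻¹ * exp (-(y ^ 2 / 2)) := by
    funext y; rw [normalPDF, neg_div]
  rw [hφ, iteratedDeriv_const_mul_field, iteratedDeriv_eq_iterate,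
    deriv_gaussian_eq_hermite_mul_gaussian, abs_mul, abs_of_pos (by positivity), mul_assoc,
    abs_mul, abs_neg_one_pow, one_mul, ← neg_div]
  gcongr
  exact hC y

lemma hasDerivAt_normalCDF_div_add (s c z : ℝ) :
    HasDerivAt (fun z => normalCDF (z / s + c)) (s⁻¹ * normalPDF (z / s + c)) z := by
  have hinner : HasDerivAt (fun z => z / s + c) s⁻¹ z := by
    simpa [div_eq_mul_inv, mul_comm] using ((hasDerivAt_id z).div_const s).add_const c
  exact ((hasDerivAt_normalCDF _).comp z hinner).congr_deriv (mul_comm _ _)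

noncomputable def callProfile (s z : ℝ) : ℝ :=
  normalCDF (z / s + s / 2) - exp (-z) * normalCDF (z / s - s / 2)

noncomputable def digitalProfile (s z : ℝ) : ℝ := exp (-z) * normalCDF (z / s - s / 2)

section

variable {s : ℝ}

lemma exp_neg_mul_normalPDF (hs : s ≠ 0) (z : ℝ) :
    exp (-z) * normalPDF (z / s - s / 2) = normalPDF (z / s + s / 2) := by
  rw [normalPDF, normalPDF, mul_left_comm, ← exp_add]
  congr 2
  field_simp
  ring

lemma hasDerivAt_callProfile (hs : s ≠ 0) (z : ℝ) :
    HasDerivAt (callProfile s) (digitalProfile s z) z := by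
  have hminus := hasDerivAt_normalCDF_div_add s (-(s / 2)) z
  simp only [← sub_eq_add_neg] at hminus
  refine ((hasDerivAt_normalCDF_div_add s (s / 2) z).sub
    ((hasDerivAt_neg z).exp.mul hminus)).congr_deriv ?_
  rw [digitalProfile, ← exp_neg_mul_normalPDF hs]
  ring

lemma hasDerivAt_digitalProfile (hs : s ≠ 0) (z : ℝ) :
    HasDerivAt (digitalProfile s)
      (-digitalProfile s z + s⁻¹ * normalPDF (z / s + s / 2)) z := by
  have hminus := hasDerivAt_normalCDF_div_add s (-(s / 2)) z
  simp only [← sub_eq_add_neg] at hminus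
  refine ((hasDerivAt_neg z).exp.mul hminus).congr_deriv ?_
  rw [digitalProfile, ← exp_neg_mul_normalPDF hs]
  ring

lemma contDiff_digitalProfile (s : ℝ) : ContDiff ℝ ∞ (digitalProfile s) := by
  unfold digitalProfile
  have := contDiff_normalCDF
  fun_prop

lemma contDiff_callProfile (s : ℝ) : ContDiff ℝ ∞ (callProfile s) := by
  unfold callProfile
  have := contDiff_normalCDF
  fun_prop

lemma deriv_callProfile (hs : s ≠ 0) : deriv (callProfile s) = digitalProfile s :=
  funext fun z => (hasDerivAt_callProfile hs z).deriv

lemma digitalProfile_nonneg (s z : ℝ) : 0 ≤ digitalProfile s z :=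
  mul_nonneg (exp_pos _).le (normalCDF_nonneg _)

lemma digitalProfile_le_one (hs : 0 < s) (z : ℝ) : digitalProfile s z ≤ 1 := by
  rcases le_or_gt 0 z with hz | hz
  · exact mul_le_one₀ (exp_le_one_iff.2 (by linarith)) (normalCDF_nonneg _) (normalCDF_le_one _)
  · have hd : z / s - s / 2 ≤ 0 := by linarith [div_neg_of_neg_of_pos hz hs]
    calc digitalProfile s z ≤ exp (-z) * exp (-(z / s - s / 2) ^ 2 / 2) :=
          mul_le_mul_of_nonneg_left (normalCDF_le_exp_neg_sq hd) (exp_pos _).le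
      _ = exp (-(z / s + s / 2) ^ 2 / 2) := by
          rw [← exp_add]
          congr 1
          field_simp
          ring
      _ ≤ 1 := exp_le_one_iff.2 (by nlinarith [sq_nonneg (z / s + s / 2)])

lemma abs_callProfile_le_one (hs : 0 < s) (z : ℝ) : |callProfile s z| ≤ 1 := by
  have h₁ := normalCDF_nonneg (z / s + s / 2)
  have h₂ := normalCDF_le_one (z / s + s / 2)
  have h₃ := digitalProfile_nonneg s z
  have h₄ := digitalProfile_le_one hs z
  rw [digitalProfile] at h₃ h₄
  rw [callProfile, abs_sub_le_iff]
  constructor <;> linarith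

lemma exists_abs_iteratedDeriv_normalPDF_div_add_le (i : ℕ) :
    ∃ C ≥ 0, ∀ s c z : ℝ, |iteratedDeriv i (fun z => normalPDF (z / s + c)) z| ≤ C * |s⁻¹| ^ i := by
  obtain ⟨C, hC⟩ := exists_abs_iteratedDeriv_normalPDF_le i
  refine ⟨C, (abs_nonneg _).trans (hC 0), fun s c z => ?_⟩
  have hcomp :
      (fun z => normalPDF (z / s + c)) = fun z => (fun w => normalPDF (w + c)) (s⁻¹ * z) := by
    simp only [div_eq_inv_mul]
  have hφ : ContDiff ℝ i fun w => normalPDF (w + c) := by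
    unfold normalPDF
    fun_prop
  rw [hcomp, iteratedDeriv_comp_const_mul hφ, iteratedDeriv_comp_add_const, abs_mul, abs_pow,
    mul_comm]
  gcongr
  exact hC _

lemma iteratedDeriv_succ_digitalProfile (hs : s ≠ 0) (j : ℕ) (z : ℝ) :
    iteratedDeriv (j + 1) (digitalProfile s) z =
      -iteratedDeriv j (digitalProfile s) z +
        s⁻¹ * iteratedDeriv j (fun z => normalPDF (z / s + s / 2)) z := by
  have hderiv : deriv (digitalProfile s) =
      fun z => -digitalProfile s z + s⁻¹ * normalPDF (z / s + s / 2) :=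
    funext fun z => (hasDerivAt_digitalProfile hs z).deriv
  have hφ : ContDiff ℝ j fun z => normalPDF (z / s + s / 2) := by
    unfold normalPDF
    fun_prop
  rw [iteratedDeriv_succ', hderiv,
    iteratedDeriv_fun_add ((contDiff_digitalProfile s).of_le (mod_cast le_top)).neg.contDiffAt
      (contDiff_const.mul hφ).contDiffAt,
    iteratedDeriv_fun_neg, iteratedDeriv_const_mul_field]

lemma exists_abs_iteratedDeriv_digitalProfile_le (j : ℕ) :
    ∃ C > 0, ∀ s > 0, ∀ z, |iteratedDeriv j (digitalProfile s) z| ≤ C * (1 + s⁻¹) ^ j := by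
  induction j with
  | zero =>
    refine ⟨1, one_pos, fun s hs z => ?_⟩
    rw [iteratedDeriv_zero, pow_zero, mul_one, abs_of_nonneg (digitalProfile_nonneg s z)]
    exact digitalProfile_le_one hs z
  | succ j ih =>
    obtain ⟨C, hC0, hC⟩ := ih
    obtain ⟨B, hB0, hB⟩ := exists_abs_iteratedDeriv_normalPDF_div_add_le j
    refine ⟨C + B, add_pos_of_pos_of_nonneg hC0 hB0, fun s hs z => ?_⟩
    have hinv : 0 < s⁻¹ := inv_pos.2 hs
    rw [iteratedDeriv_succ_digitalProfile hs.ne']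
    calc _ ≤ |iteratedDeriv j (digitalProfile s) z| +
          s⁻¹ * |iteratedDeriv j (fun z => normalPDF (z / s + s / 2)) z| := by
          refine (abs_add_le _ _).trans_eq ?_
          rw [abs_neg, abs_mul, abs_of_pos hinv]
      _ ≤ C * (1 + s⁻¹) ^ j + s⁻¹ * (B * |s⁻¹| ^ j) := by
          gcongr
          · exact hC s hs z
          · exact hB s _ z
      _ = C * (1 + s⁻¹) ^ j + B * s⁻¹ ^ (j + 1) := by rw [abs_of_pos hinv]; ring
      _ ≤ C * (1 + s⁻¹) ^ (j + 1) + B * (1 + s⁻¹) ^ (j + 1) := by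
          gcongr
          · linarith
          · omega
          · linarith
      _ = (C + B) * (1 + s⁻¹) ^ (j + 1) := by ring

lemma exists_abs_iteratedDeriv_callProfile_le (j : ℕ) :
    ∃ C > 0, ∀ s > 0, ∀ z, |iteratedDeriv j (callProfile s) z| ≤ C * (1 + s⁻¹) ^ (j - 1) := by
  cases j with
  | zero =>
    refine ⟨1, one_pos, fun s hs z => ?_⟩
    simpa using abs_callProfile_le_one hs z
  | succ j =>
    obtain ⟨C, hC0, hC⟩ := exists_abs_iteratedDeriv_digitalProfile_le j
    refine ⟨C, hC0, fun s hs z => ?_⟩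
    rw [iteratedDeriv_succ', deriv_callProfile hs.ne', Nat.add_sub_cancel]
    exact hC s hs z

lemma exists_abs_iteratedDeriv_callProfile_le_of_le (J : ℕ) :
    ∃ C > 0, ∀ j ≤ J, ∀ s > 0, ∀ z,
      |iteratedDeriv j (callProfile s) z| ≤ C * (1 + s⁻¹) ^ (J - 1) := by
  choose C hC0 hC using exists_abs_iteratedDeriv_callProfile_le
  refine ⟨∑ j ∈ Finset.range (J + 1), C j,
    Finset.sum_pos (fun j _ => hC0 j) Finset.nonempty_range_add_one,
    fun j hj s hs z => (hC j s hs z).trans ?_⟩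
  gcongr
  · exact Finset.sum_nonneg fun j _ => (hC0 j).le
  · exact Finset.single_le_sum (fun j _ => (hC0 j).le) (Finset.mem_range_succ_iff.2 hj)
  · exact le_add_of_nonneg_right (inv_pos.2 hs).le

end

lemma abs_iteratedDeriv_exp_mul_le {g : ℝ → ℝ} {n : ℕ} (hg : ContDiff ℝ n g) {B : ℝ} (x : ℝ)
    (hB : ∀ i ≤ n, |iteratedDeriv i g x| ≤ B) :
    |iteratedDeriv n (fun y => exp y * g y) x| ≤ 2 ^ n * exp x * B := by
  rw [iteratedDeriv_fun_mul contDiff_exp.contDiffAt hg.contDiffAt]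
  calc _ ≤ ∑ i ∈ Finset.range (n + 1), n.choose i * exp x * B := by
        refine (Finset.abs_sum_le_sum_abs _ _).trans (Finset.sum_le_sum fun i _ => ?_)
        rw [iteratedDeriv_eq_iterate, iter_deriv_exp, abs_mul, abs_mul, Nat.abs_cast,
          abs_of_pos (exp_pos x)]
        gcongr
        exact hB _ (Nat.sub_le n i)
    _ = 2 ^ n * exp x * B := by
        rw [← Finset.sum_mul, ← Finset.sum_mul, ← Nat.cast_sum, Nat.sum_range_choose]
        push_cast
        ring

lemma iteratedDeriv_iteratedDeriv {𝕜 F : Type*} [NontriviallyNormedField 𝕜] [NormedAddCommGroup F]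
    [NormedSpace 𝕜 F] (i m : ℕ) (f : 𝕜 → F) :
    iteratedDeriv i (iteratedDeriv m f) = iteratedDeriv (i + m) f := by
  simp only [iteratedDeriv_eq_iterate, Function.iterate_add, Function.comp_apply]

lemma uBS_eq_exp_mul_callProfile {σ τ : ℝ} (hσ : 0 < σ) (hτ : 0 < τ) (x k : ℝ) :
    uBS σ τ x k = exp x * callProfile (σ * √τ) (x - k) := by
  have hs : σ * √τ ≠ 0 := by positivity
  have hvar : σ ^ 2 * τ = (σ * √τ) ^ 2 := by rw [mul_pow, sq_sqrt hτ.le]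
  have hplus : (x - k + σ ^ 2 * τ / 2) / (σ * √τ) = (x - k) / (σ * √τ) + σ * √τ / 2 := by
    rw [hvar]; field_simp
  have hminus : (x - k - σ ^ 2 * τ / 2) / (σ * √τ) = (x - k) / (σ * √τ) - σ * √τ / 2 := by
    rw [hvar]; field_simp
  rw [uBS, callProfile, hplus, hminus, mul_sub, ← mul_assoc, ← exp_add, neg_sub, add_sub_cancel]

lemma iteratedDeriv_strike_uBS {σ τ : ℝ} (hσ : 0 < σ) (hτ : 0 < τ) (m : ℕ) (x k : ℝ) :
    iteratedDeriv m (fun k' => uBS σ τ x k') k =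
      (-1) ^ m * (exp x * iteratedDeriv m (callProfile (σ * √τ)) (x - k)) := by
  simp_rw [uBS_eq_exp_mul_callProfile hσ hτ]
  rw [iteratedDeriv_const_mul_field, iteratedDeriv_comp_const_sub]
  simp only [smul_eq_mul]
  ring

lemma rpow_min_one_sub_zero {s : ℝ} (hs : 0 < s) (J : ℕ) :
    s ^ min (1 - (J : ℝ)) 0 = s⁻¹ ^ (J - 1) := by
  rcases Nat.eq_zero_or_pos J with rfl | hJ
  · norm_num
  · have hJ' : (1 : ℝ) ≤ J := by exact_mod_cast hJ
    rw [min_eq_left (by linarith), inv_pow, ← rpow_natCast, ← rpow_neg hs.le]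
    congr 1
    push_cast [Nat.cast_sub hJ]
    ring

lemma one_add_inv_pow_le {s M : ℝ} (hs : 0 < s) (hsM : s ≤ M) (p : ℕ) :
    (1 + s⁻¹) ^ p ≤ (M + 1) ^ p * s⁻¹ ^ p := by
  rw [← mul_pow]
  gcongr
  rw [add_mul, one_mul, add_le_add_iff_right, ← div_eq_mul_inv, one_le_div hs]
  exact hsM

theorem stmt_9 (M : ℝ) (hM : 0 < M) (m n : ℕ) :
    ∃ C > 0, ∀ x k σ τ : ℝ, 0 < σ → 0 < τ → σ * Real.sqrt τ ≤ M →
      |iteratedDeriv n (fun x' => iteratedDeriv m (fun k' => uBS σ τ x' k') k) x| ≤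
        C * Real.exp x * (σ * Real.sqrt τ) ^ (min (1 - (m : ℝ) - n) 0) := by
  obtain ⟨C, hC0, hC⟩ := exists_abs_iteratedDeriv_callProfile_le_of_le (m + n)
  refine ⟨2 ^ n * C * (M + 1) ^ (m + n - 1), by positivity, fun x k σ τ hσ hτ hsM => ?_⟩
  set s := σ * √τ
  have hs : 0 < s := by positivity
  have hg : ContDiff ℝ n fun x' => iteratedDeriv m (callProfile s) (x' - k) := by
    rw [iteratedDeriv_eq_iterate]
    exact (((contDiff_callProfile s).iterate_deriv m).comp
      (contDiff_id.sub contDiff_const)).of_le (mod_cast le_top)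
  have hbound : ∀ i ≤ n, |iteratedDeriv i (fun x' => iteratedDeriv m (callProfile s) (x' - k)) x|
      ≤ C * (1 + s⁻¹) ^ (m + n - 1) := fun i hi => by
    rw [iteratedDeriv_comp_sub_const, iteratedDeriv_iteratedDeriv]
    exact hC (i + m) (by omega) s hs (x - k)
  simp_rw [iteratedDeriv_strike_uBS hσ hτ m _ k]
  rw [iteratedDeriv_const_mul_field, abs_mul, abs_pow, abs_neg, abs_one, one_pow, one_mul,
    show 1 - (m : ℝ) - n = 1 - ((m + n : ℕ) : ℝ) by push_cast; ring, rpow_min_one_sub_zero hs]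
  calc _ ≤ 2 ^ n * exp x * (C * (1 + s⁻¹) ^ (m + n - 1)) :=
        abs_iteratedDeriv_exp_mul_le hg x hbound
    _ ≤ 2 ^ n * exp x * (C * ((M + 1) ^ (m + n - 1) * s⁻¹ ^ (m + n - 1))) := by
        gcongr
        exact one_add_inv_pow_le hs hsM _
    _ = 2 ^ n * C * (M + 1) ^ (m + n - 1) * exp x * s⁻¹ ^ (m + n - 1) := by ring
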